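/- arXiv:2508.06491 — 3 statements merged into one kernel-verified Lean document; each statement's English description precedes it below -/
import Mathlib

section
/- Let T > 0, α > 0, q > 0 and γ ∈ (0,1), and set k = √(1−γ). Define g : [0,T] → ℝ by g(t) = (γ·α / (2·(1−γ)·q)) · sinh(α(T−t)/k) / ( sinh(α(T−t)/k) + k·cosh(α(T−t)/k) ). Then g(T) = 0, the denominator sinh(α(T−t)/k) + k·cosh(α(T−t)/k) is strictly positive for all t ∈ [0,T], and g solves the scalar Riccati differential equation g'(t) = (2α/(1−γ))·g(t) − 2q·g(t)² − γ·α²/(2·(1−γ)²·q) for all t ∈ (0,T). -/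
open Real Set

theorem riccati_closed_form (T α q γ : ℝ) (hT : 0 < T) (hα : 0 < α) (hq : 0 < q)
    (hγ : γ ∈ Set.Ioo (0 : ℝ) 1)
    (k : ℝ) (hk : k = Real.sqrt (1 - γ))
    (g : ℝ → ℝ)
    (hg : ∀ t, g t = (γ * α / (2 * (1 - γ) * q)) *
        Real.sinh (α * (T - t) / k) /
        (Real.sinh (α * (T - t) / k) + k * Real.cosh (α * (T - t) / k))) :
    g T = 0 ∧
    (∀ t ∈ Set.Icc (0 : ℝ) T,
      0 < Real.sinh (α * (T - t) / k) + k * Real.cosh (α * (T - t) / k)) ∧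
    (∀ t ∈ Set.Ioo (0 : ℝ) T,
      HasDerivAt g
        ((2 * α / (1 - γ)) * g t - 2 * q * (g t) ^ 2 - γ * α ^ 2 / (2 * (1 - γ) ^ 2 * q)) t) := by
  obtain ⟨hγ0, hγ1⟩ := hγ
  have h1γ : (0:ℝ) < 1 - γ := by linarith
  have hk0 : 0 < k := hk ▸ Real.sqrt_pos.2 h1γ
  have hk2 : k ^ 2 = 1 - γ := by rw [hk, sq_sqrt h1γ.le]
  have hpos : ∀ t ∈ Set.Icc (0:ℝ) T,
      0 < Real.sinh (α * (T - t) / k) + k * Real.cosh (α * (T - t) / k) := by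
    intro t ht
    have harg : 0 ≤ α * (T - t) / k := by
      have : 0 ≤ T - t := by linarith [ht.2]
      positivity
    have h1 : 0 ≤ Real.sinh (α * (T - t) / k) := by
      have := Real.sinh_le_sinh.2 harg
      simpa using this
    have h2 : 0 < Real.cosh (α * (T - t) / k) := Real.cosh_pos _
    nlinarith
  refine ⟨by rw [hg T]; simp, hpos, ?_⟩
  intro t ht
  have hDpos : 0 < Real.sinh (α * (T - t) / k) + k * Real.cosh (α * (T - t) / k) :=
    hpos t ⟨ht.1.le, ht.2.le⟩
  have hDne : Real.sinh (α * (T - t) / k) + k * Real.cosh (α * (T - t) / k) ≠ 0 :=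
    ne_of_gt hDpos
  have hu : HasDerivAt (fun s => α * (T - s) / k) (-(α / k)) t := by
    have h := (((hasDerivAt_id t).const_sub T).const_mul α).div_const k
    refine h.congr_deriv ?_
    ring
  have hS : HasDerivAt (fun s => Real.sinh (α * (T - s) / k))
      (Real.cosh (α * (T - t) / k) * (-(α / k))) t :=
    (Real.hasDerivAt_sinh _).comp t hu
  have hC : HasDerivAt (fun s => Real.cosh (α * (T - s) / k))
      (Real.sinh (α * (T - t) / k) * (-(α / k))) t :=
    (Real.hasDerivAt_cosh _).comp t hu
  have hD : HasDerivAt (fun s => Real.sinh (α * (T - s) / k) + k * Real.cosh (α * (T - s) / k))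
      (Real.cosh (α * (T - t) / k) * (-(α / k)) +
        k * (Real.sinh (α * (T - t) / k) * (-(α / k)))) t := hS.add (hC.const_mul k)
  have hnum : HasDerivAt (fun s => (γ * α / (2 * (1 - γ) * q)) * Real.sinh (α * (T - s) / k))
      ((γ * α / (2 * (1 - γ) * q)) * (Real.cosh (α * (T - t) / k) * (-(α / k)))) t :=
    hS.const_mul _
  have hder := hnum.div hD hDne
  have hgfun : g = fun s => (γ * α / (2 * (1 - γ) * q)) * Real.sinh (α * (T - s) / k) /
      (Real.sinh (α * (T - s) / k) + k * Real.cosh (α * (T - s) / k)) := funext hg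
  rw [hgfun]
  refine hder.congr_deriv ?_
  beta_reduce
  have hC2 : Real.cosh (α * (T - t) / k) ^ 2 = Real.sinh (α * (T - t) / k) ^ 2 + 1 :=
    Real.cosh_sq _
  set S := Real.sinh (α * (T - t) / k)
  set C := Real.cosh (α * (T - t) / k)
  have hne1 : (1 - γ) ≠ 0 := ne_of_gt h1γ
  have hneq : q ≠ 0 := ne_of_gt hq
  have hnek : k ≠ 0 := ne_of_gt hk0
  have hγk : γ = 1 - k ^ 2 := by linarith
  rw [hγk]
  have hk2ne : 1 - (1 - k ^ 2) ≠ 0 := by rw [← hγk]; exact ne_of_gt h1γ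
  field_simp
  ring_nf
end

section
/- Let n ≥ 1, let σ be an invertible real n×n matrix with rows σ₁, …, σₙ, let α₁, …, αₙ > 0, and let t < τ be real numbers. Define the n×n matrix Σ(τ) by Σ(τ)_{ij} = (σ_i σ_jᵀ)·(1 − exp(−(τ−t)(α_i + α_j)))/(α_i + α_j). Then Σ(τ) is symmetric positive definite. -/
open Matrix intervalIntegral

private lemma exp_int (c T : ℝ) (hc : c ≠ 0) :
    ∫ s in (0:ℝ)..T, Real.exp (-(c * s)) = (1 - Real.exp (-(T * c))) / c := by
  have h : ∀ s ∈ Set.uIcc (0:ℝ) T, HasDerivAt (fun u => -Real.exp (-(c * u)) / c)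
      (Real.exp (-(c * s))) s := by
    intro s _
    have h1 : HasDerivAt (fun u : ℝ => -(c * u)) (-c) s := by
      simpa using ((hasDerivAt_id s).const_mul c).fun_neg
    have h2 : HasDerivAt (fun u => -Real.exp (-(c * u)) / c) (-(Real.exp (-(c * s)) * -c) / c) s :=
      (h1.exp).fun_neg.div_const c
    convert h2 using 1
    field_simp
  rw [intervalIntegral.integral_eq_sub_of_hasDerivAt h
    (Continuous.intervalIntegrable (by continuity) 0 T)]
  rw [mul_zero, neg_zero, Real.exp_zero, mul_comm T c]
  field_simp
  ring

private lemma sq_expand {n : ℕ} (a : Fin n → ℝ) (σ : Matrix (Fin n) (Fin n) ℝ) :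
    ∑ k, (∑ i, a i * σ i k) ^ 2 = ∑ i, ∑ j, a i * a j * (σ i ⬝ᵥ σ j) := by
  have e1 : ∀ k : Fin n, (∑ i, a i * σ i k)^2 = ∑ i, ∑ j, (a i * σ i k) * (a j * σ j k) := by
    intro k; rw [sq, Finset.sum_mul_sum]
  rw [Finset.sum_congr rfl (fun k _ => e1 k), Finset.sum_comm]
  refine Finset.sum_congr rfl fun i _ => ?_
  rw [Finset.sum_comm]
  refine Finset.sum_congr rfl fun j _ => ?_
  rw [dotProduct, Finset.mul_sum]
  exact Finset.sum_congr rfl fun k _ => by ring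

private lemma cont_exp (c : ℝ) : Continuous fun s : ℝ => Real.exp (-(c * s)) :=
  Real.continuous_exp.comp ((continuous_const.mul continuous_id).neg)

set_option maxHeartbeats 1000000 in
private lemma quad_eq {n : ℕ} (σ : Matrix (Fin n) (Fin n) ℝ) (α : Fin n → ℝ)
    (hα : ∀ i, 0 < α i) (T : ℝ) (x : Fin n → ℝ) :
    (∫ s in (0:ℝ)..T, ∑ k, (∑ i, (x i * Real.exp (-(α i * s))) * σ i k) ^ 2)
    = ∑ i, ∑ j, x i * x j *
        ((σ i ⬝ᵥ σ j) * (1 - Real.exp (-(T * (α i + α j)))) / (α i + α j)) := by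
  have heq : Set.EqOn (fun s => ∑ k, (∑ i, (x i * Real.exp (-(α i * s))) * σ i k) ^ 2)
      (fun s => ∑ i, ∑ j, x i * x j * ((σ i ⬝ᵥ σ j) * Real.exp (-((α i + α j) * s))))
      (Set.uIcc 0 T) := by
    intro s _
    dsimp only
    rw [sq_expand]
    refine Finset.sum_congr rfl fun i _ => Finset.sum_congr rfl fun j _ => ?_
    have he : Real.exp (-(α i * s)) * Real.exp (-(α j * s))
        = Real.exp (-((α i + α j) * s)) := by
      rw [← Real.exp_add]; ring_nf
    rw [← he]; ring
  have hint : ∀ i j : Fin n, IntervalIntegrable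
      (fun s => x i * x j * ((σ i ⬝ᵥ σ j) * Real.exp (-((α i + α j) * s))))
      MeasureTheory.volume 0 T :=
    fun i j => (continuous_const.mul (continuous_const.mul (cont_exp (α i + α j)))).intervalIntegrable 0 T
  rw [intervalIntegral.integral_congr heq,
    intervalIntegral.integral_finset_sum
      (f := fun (i : Fin n) (s : ℝ) => ∑ j, x i * x j * ((σ i ⬝ᵥ σ j) * Real.exp (-((α i + α j) * s))))
      (fun i _ => (continuous_finset_sum _ fun j _ =>
        continuous_const.mul (continuous_const.mul (cont_exp (α i + α j)))).intervalIntegrable 0 T)]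
  refine Finset.sum_congr rfl fun i _ => ?_
  rw [intervalIntegral.integral_finset_sum (fun j _ => hint i j)]
  refine Finset.sum_congr rfl fun j _ => ?_
  rw [intervalIntegral.integral_const_mul, intervalIntegral.integral_const_mul,
    exp_int _ _ (by have := hα i; have := hα j; positivity), mul_div_assoc]

theorem ou_covariance_posDef {n : ℕ} (hn : 1 ≤ n)
    (σ : Matrix (Fin n) (Fin n) ℝ) (hσ : IsUnit σ)
    (α : Fin n → ℝ) (hα : ∀ i, 0 < α i)
    (t τ : ℝ) (htτ : t < τ) :
    (Matrix.of fun i j : Fin n =>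
        (σ i ⬝ᵥ σ j) * (1 - Real.exp (-(τ - t) * (α i + α j))) / (α i + α j)).PosDef := by
  refine Matrix.PosDef.of_dotProduct_mulVec_pos ?_ ?_
  · ext i j
    simp only [Matrix.conjTranspose_apply, star_trivial, Matrix.of_apply]
    rw [dotProduct_comm, add_comm (α j) (α i)]
  · intro x hx
    have lhs : x ⬝ᵥ ((Matrix.of fun i j : Fin n =>
        (σ i ⬝ᵥ σ j) * (1 - Real.exp (-(τ - t) * (α i + α j))) / (α i + α j)) *ᵥ x)
        = ∑ i, ∑ j, x i * x j *
          ((σ i ⬝ᵥ σ j) * (1 - Real.exp (-((τ - t) * (α i + α j)))) / (α i + α j)) := by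
      simp only [dotProduct, Matrix.mulVec, Matrix.of_apply, Finset.mul_sum]
      refine Finset.sum_congr rfl fun i _ => Finset.sum_congr rfl fun j _ => ?_
      rw [neg_mul]
      ring
    simp only [RCLike.re_to_real, star_trivial]
    rw [lhs, ← quad_eq σ α hα (τ - t) x]
    have hT : 0 < τ - t := by linarith
    have hcont : Continuous fun s : ℝ =>
        ∑ k, (∑ i, (x i * Real.exp (-(α i * s))) * σ i k) ^ 2 := by
      refine continuous_finset_sum _ fun k _ => (Continuous.pow ?_ 2)
      exact continuous_finset_sum _ fun i _ => (continuous_const.mul (cont_exp (α i))).mul continuous_const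
    refine intervalIntegral.intervalIntegral_pos_of_pos_on
      (hcont.intervalIntegrable 0 (τ - t)) (fun s _ => ?_) hT
    have hvec : (fun i => x i * Real.exp (-(α i * s))) ᵥ* σ ≠ 0 := by
      intro hzero
      have hinj := Matrix.vecMul_injective_iff_isUnit.2 hσ
      have hz : (fun i => x i * Real.exp (-(α i * s))) = 0 :=
        hinj (a₂ := 0) (by simpa using hzero)
      apply hx
      funext i
      have hi := congrFun hz i
      simp only [Pi.zero_apply] at hi ⊢
      rcases mul_eq_zero.1 hi with h | h
      · exact h
      · exact absurd h (Real.exp_ne_zero _)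
    obtain ⟨k, hk⟩ := Function.ne_iff.1 hvec
    refine Finset.sum_pos' (fun k _ => sq_nonneg _) ⟨k, Finset.mem_univ k, ?_⟩
    have hne : (∑ i, (x i * Real.exp (-(α i * s))) * σ i k) ≠ 0 := by
      simpa [Matrix.vecMul, dotProduct] using hk
    positivity
end

section
/- Let n ≥ 1, T > 0, γ ∈ (0,1), r > 0, ρ₀ ∈ ℝ, ρ ∈ ℝⁿ, let ϱ be a real symmetric n×n matrix, let α₁,…,αₙ > 0 with D = diag(α₁,…,αₙ), let μ, w ∈ ℝⁿ, let σ be an invertible real n×n matrix, and let e ∈ ℝⁿ be the all-ones vector. Suppose g : [0,T] → (real symmetric n×n matrices), f : [0,T] → ℝⁿ and f₀ : [0,T] → ℝ are differentiable and satisfy, for all t ∈ (0,T): g'(t) = (1/(1−γ))·D·g(t) + (1/(1−γ))·g(t)·D − 2g(t)σσᵀg(t) − γ·D(σσᵀ)⁻¹D/(2(1−γ)²) + ϱ/(1−γ); f'(t) = (1/(1−γ))·D·f(t) − 2g(t)σσᵀf(t) − 2g(t)Dw − (2γ/(1−γ))·g(t)(Dμ − re) + (γ/(1−γ)²)·D(σσᵀ)⁻¹(Dμ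 − re) + ρ/(1−γ); f₀'(t) = −wᵀD f(t) − (γ/(1−γ))(μᵀD − reᵀ)f(t) − (1/2)f(t)ᵀσσᵀf(t) − tr(g(t)σσᵀ) − γ(μᵀD − reᵀ)(σσᵀ)⁻¹(Dμ − re)/(2(1−γ)²) − (rγ − ρ₀)/(1−γ); together with the terminal conditions g(T) = 0, f(T) = 0, f₀(T) = 0. Define φ₁ : [0,T] × ℝⁿ → ℝ by φ₁(t,S) = exp(Sᵀg(t)S + f(t)ᵀS + f₀(t)). Then φ₁(T,S) = 1 for all S, and for all t ∈ (0,T) and S ∈ ℝⁿ: ∂φ₁/∂t + (w − S)ᵀD·∇_Sφ₁ + (γ/(1−γ))·((μ − S)ᵀD − reᵀ)·∇_Sφ₁ + { γ·((μ−S)ᵀD − reᵀ)(σσᵀ)⁻¹(D(μ−S) − re)/(2(1−γ)²) + (rγ − ρ₀ − Sᵀρ − SᵀϱS)/(1−γ) }·φ₁ + (1/2)·tr( Hess_S φ₁ · σσᵀ ) = 0, where ∇_Sφ₁ and Hess_Sφ₁ denote the gradient and Hessian of φ₁ in the variable S. -/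
open Matrix Set

attribute [local instance] Matrix.frobeniusNormedAddCommGroup Matrix.frobeniusNormedSpace

/-- Gradient of a function on `Fin n → ℝ`: vector of partial derivatives. -/
noncomputable def gradient' {n : ℕ} (φ : (Fin n → ℝ) → ℝ) (S : Fin n → ℝ) : Fin n → ℝ :=
  fun i => fderiv ℝ φ S (Pi.single i 1)

/-- Hessian matrix of a function on `Fin n → ℝ`: matrix of second partial derivatives. -/
noncomputable def hessian' {n : ℕ} (φ : (Fin n → ℝ) → ℝ) (S : Fin n → ℝ) :
    Matrix (Fin n) (Fin n) ℝ :=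
  Matrix.of fun i j => fderiv ℝ (fun S' => fderiv ℝ φ S' (Pi.single j 1)) S (Pi.single i 1)

variable {n : ℕ}


/-- dot product with a fixed vector, as a CLM -/
noncomputable def dpCLM (v : Fin n → ℝ) : (Fin n → ℝ) →L[ℝ] ℝ :=
  LinearMap.toContinuousLinearMap
    { toFun := fun u => v ⬝ᵥ u
      map_add' := fun x y => by simp [dotProduct_add]
      map_smul' := fun c x => by simp [dotProduct_smul] }

@[simp] lemma dpCLM_apply (v u : Fin n → ℝ) : dpCLM v u = v ⬝ᵥ u := rfl

lemma dpCLM_add (v w : Fin n → ℝ) : dpCLM (v + w) = dpCLM v + dpCLM w := by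
  ext u; simp [add_dotProduct]

/-- the bilinear map (x,y) ↦ x ⬝ᵥ A *ᵥ y as a CLM-valued CLM -/
noncomputable def qCLM (A : Matrix (Fin n) (Fin n) ℝ) :
    (Fin n → ℝ) →L[ℝ] (Fin n → ℝ) →L[ℝ] ℝ :=
  LinearMap.toContinuousLinearMap
    { toFun := fun x => dpCLM (Aᵀ *ᵥ x)
      map_add' := fun x y => by
        ext u; simp [Matrix.mulVec_add, add_dotProduct]
      map_smul' := fun c x => by
        ext u; simp [Matrix.mulVec_smul, smul_dotProduct] }

@[simp] lemma qCLM_apply (A : Matrix (Fin n) (Fin n) ℝ) (x u : Fin n → ℝ) :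
    qCLM A x u = x ⬝ᵥ A *ᵥ u := by
  show (Aᵀ *ᵥ x) ⬝ᵥ u = x ⬝ᵥ A *ᵥ u
  rw [Matrix.mulVec_transpose, ← Matrix.dotProduct_mulVec]

lemma hasFDerivAt_quad (A : Matrix (Fin n) (Fin n) ℝ) (hA : A.IsSymm) (S : Fin n → ℝ) :
    HasFDerivAt (fun S' : Fin n → ℝ => S' ⬝ᵥ A *ᵥ S') (dpCLM ((2:ℝ) • (A *ᵥ S))) S := by
  have hb := (qCLM A).isBoundedBilinearMap
  have heq : (fun S' : Fin n → ℝ => S' ⬝ᵥ A *ᵥ S') = fun S' => qCLM A S' S' := by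
    funext S'; rw [qCLM_apply]
  rw [heq]
  have h2 := ((qCLM A).hasFDerivAt (x := S)).clm_apply (hasFDerivAt_id S)
  refine h2.congr_fderiv ?_
  ext u
  have key : u ⬝ᵥ A *ᵥ S = S ⬝ᵥ A *ᵥ u := by
    rw [Matrix.dotProduct_mulVec, ← Matrix.mulVec_transpose, hA.eq, dotProduct_comm]
  simp only [IsBoundedBilinearMap.deriv_apply, smul_dotProduct, two_smul, add_dotProduct,
    dpCLM_apply, ContinuousLinearMap.add_apply, ContinuousLinearMap.comp_apply,
    ContinuousLinearMap.coe_id', id_eq, ContinuousLinearMap.flip_apply, qCLM_apply]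
  rw [dotProduct_comm (A *ᵥ S) u, key]

lemma hasFDerivAt_ansatz (A : Matrix (Fin n) (Fin n) ℝ) (hA : A.IsSymm)
    (c : Fin n → ℝ) (d : ℝ) (S : Fin n → ℝ) :
    HasFDerivAt (fun S' : Fin n → ℝ => Real.exp (S' ⬝ᵥ A *ᵥ S' + c ⬝ᵥ S' + d))
      (Real.exp (S ⬝ᵥ A *ᵥ S + c ⬝ᵥ S + d) • dpCLM ((2:ℝ) • (A *ᵥ S) + c)) S := by
  have h1 : HasFDerivAt (fun S' : Fin n → ℝ => S' ⬝ᵥ A *ᵥ S' + c ⬝ᵥ S' + d)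
      (dpCLM ((2:ℝ) • (A *ᵥ S)) + dpCLM c) S := by
    have hc : HasFDerivAt (fun S' : Fin n → ℝ => c ⬝ᵥ S') (dpCLM c) S :=
      (dpCLM c).hasFDerivAt
    exact ((hasFDerivAt_quad A hA S).add hc).add_const d
  have := h1.exp
  rwa [← dpCLM_add] at this

lemma gradient_ansatz (A : Matrix (Fin n) (Fin n) ℝ) (hA : A.IsSymm)
    (c : Fin n → ℝ) (d : ℝ) (S : Fin n → ℝ) :
    gradient' (fun S' : Fin n → ℝ => Real.exp (S' ⬝ᵥ A *ᵥ S' + c ⬝ᵥ S' + d)) S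
      = Real.exp (S ⬝ᵥ A *ᵥ S + c ⬝ᵥ S + d) • ((2:ℝ) • (A *ᵥ S) + c) := by
  funext i
  rw [gradient', (hasFDerivAt_ansatz A hA c d S).fderiv]
  simp [dotProduct_single]

lemma hessian_ansatz (A : Matrix (Fin n) (Fin n) ℝ) (hA : A.IsSymm)
    (c : Fin n → ℝ) (d : ℝ) (S : Fin n → ℝ) :
    hessian' (fun S' : Fin n → ℝ => Real.exp (S' ⬝ᵥ A *ᵥ S' + c ⬝ᵥ S' + d)) S
      = Real.exp (S ⬝ᵥ A *ᵥ S + c ⬝ᵥ S + d) •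
        (Matrix.vecMulVec ((2:ℝ) • (A *ᵥ S) + c) ((2:ℝ) • (A *ᵥ S) + c) + (2:ℝ) • A) := by
  funext i j
  show fderiv ℝ (fun S' => fderiv ℝ
      (fun S'' : Fin n → ℝ => Real.exp (S'' ⬝ᵥ A *ᵥ S'' + c ⬝ᵥ S'' + d)) S' (Pi.single j 1))
      S (Pi.single i 1) = _
  have hin : (fun S' : Fin n → ℝ => fderiv ℝ
      (fun S'' : Fin n → ℝ => Real.exp (S'' ⬝ᵥ A *ᵥ S'' + c ⬝ᵥ S'' + d)) S' (Pi.single j 1))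
      = fun S' => Real.exp (S' ⬝ᵥ A *ᵥ S' + c ⬝ᵥ S' + d) * (((2:ℝ) • (A *ᵥ S') + c) j) := by
    funext S'
    rw [(hasFDerivAt_ansatz A hA c d S').fderiv]
    simp [dotProduct_single]
  rw [hin]
  -- derivative of the product
  have haff : HasFDerivAt (fun S' : Fin n → ℝ => ((2:ℝ) • (A *ᵥ S') + c) j)
      ((2:ℝ) • dpCLM (A j)) S := by
    have : (fun S' : Fin n → ℝ => ((2:ℝ) • (A *ᵥ S') + c) j)
        = fun S' => 2 * dpCLM (A j) S' + c j := by
      funext S'; simp [Matrix.mulVec, dpCLM]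
    rw [this]
    exact (((dpCLM (A j)).hasFDerivAt (x := S)).const_mul 2).add_const (c j)
  have hprod : HasFDerivAt (fun S' : Fin n → ℝ => Real.exp (S' ⬝ᵥ A *ᵥ S' + c ⬝ᵥ S' + d)
      * (((2:ℝ) • (A *ᵥ S') + c) j)) _ S := (hasFDerivAt_ansatz A hA c d S).mul haff
  rw [hprod.fderiv]
  simp only [ContinuousLinearMap.add_apply, ContinuousLinearMap.smul_apply, dpCLM_apply,
    dotProduct_single, smul_eq_mul, Matrix.smul_apply, Matrix.add_apply,
    Matrix.vecMulVec_apply]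
  have hji : A j i = A i j := hA.apply j i ▸ rfl
  simp only [Pi.add_apply, Pi.smul_apply, smul_eq_mul, hji]
  ring

lemma mv_dot (M : Matrix (Fin n) (Fin n) ℝ) (x y : Fin n → ℝ) :
    (M *ᵥ x) ⬝ᵥ y = x ⬝ᵥ (Mᵀ *ᵥ y) := by
  rw [Matrix.dotProduct_mulVec, Matrix.vecMul_transpose]

lemma trace_vecMulVec_mul (v w : Fin n → ℝ) (M : Matrix (Fin n) (Fin n) ℝ) :
    (Matrix.vecMulVec v w * M).trace = w ⬝ᵥ M *ᵥ v := by
  simp only [Matrix.trace, Matrix.diag, Matrix.mul_apply, Matrix.vecMulVec_apply,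
    dotProduct, Matrix.mulVec]
  rw [Finset.sum_comm]
  simp only [Finset.mul_sum, Finset.sum_mul]
  apply Finset.sum_congr rfl; intro j _
  apply Finset.sum_congr rfl; intro i _
  ring

/-- evaluation M ↦ S ⬝ᵥ M *ᵥ S as a CLM on matrices -/
noncomputable def qEvalCLM (S : Fin n → ℝ) : Matrix (Fin n) (Fin n) ℝ →L[ℝ] ℝ :=
  LinearMap.toContinuousLinearMap
    { toFun := fun M => S ⬝ᵥ M *ᵥ S
      map_add' := fun M N => by simp [Matrix.add_mulVec, dotProduct_add]
      map_smul' := fun c M => by simp [Matrix.smul_mulVec, dotProduct_smul]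
    }

@[simp] lemma qEvalCLM_apply (S : Fin n → ℝ) (M : Matrix (Fin n) (Fin n) ℝ) :
    qEvalCLM S M = S ⬝ᵥ M *ᵥ S := rfl


lemma hasDerivAt_Q {n : ℕ} (g : ℝ → Matrix (Fin n) (Fin n) ℝ) (f : ℝ → (Fin n → ℝ))
    (f₀ : ℝ → ℝ) (G' : Matrix (Fin n) (Fin n) ℝ) (F' : Fin n → ℝ) (f0' t : ℝ)
    (S : Fin n → ℝ) (hg : HasDerivAt g G' t) (hf : HasDerivAt f F' t)
    (h0 : HasDerivAt f₀ f0' t) :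
    HasDerivAt (fun t' => S ⬝ᵥ (g t') *ᵥ S + f t' ⬝ᵥ S + f₀ t')
      (S ⬝ᵥ G' *ᵥ S + F' ⬝ᵥ S + f0') t := by
  have h1 : HasDerivAt (fun t' => S ⬝ᵥ (g t') *ᵥ S) (S ⬝ᵥ G' *ᵥ S) t := by
    have := (qEvalCLM S).hasFDerivAt.comp_hasDerivAt t hg
    exact this
  have h2 : HasDerivAt (fun t' => f t' ⬝ᵥ S) (F' ⬝ᵥ S) t := by
    have e2 : (fun t' => f t' ⬝ᵥ S) = fun t' => dpCLM S (f t') := by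
      funext t'; rw [dpCLM_apply, dotProduct_comm]
    rw [e2, show F' ⬝ᵥ S = dpCLM S F' from dotProduct_comm _ _]
    have := (dpCLM S).hasFDerivAt.comp_hasDerivAt t hf
    exact this
  exact (h1.add h2).add h0

set_option maxHeartbeats 2000000 in
theorem ansatz_solves_pde {n : ℕ} (hn : 1 ≤ n)
    (T γ r ρ₀ : ℝ) (hT : 0 < T) (hγ : γ ∈ Set.Ioo (0 : ℝ) 1) (hr : 0 < r)
    (ρ : Fin n → ℝ) (ϱ : Matrix (Fin n) (Fin n) ℝ) (hϱ : ϱ.IsSymm)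
    (α : Fin n → ℝ) (hα : ∀ i, 0 < α i)
    (D : Matrix (Fin n) (Fin n) ℝ) (hD : D = Matrix.diagonal α)
    (μ w : Fin n → ℝ)
    (σ : Matrix (Fin n) (Fin n) ℝ) (hσ : IsUnit σ)
    (e : Fin n → ℝ) (he : e = fun _ => 1)
    (g : ℝ → Matrix (Fin n) (Fin n) ℝ) (hgsymm : ∀ t, (g t).IsSymm)
    (f : ℝ → (Fin n → ℝ)) (f₀ : ℝ → ℝ)
    (hgode : ∀ t ∈ Set.Ioo (0 : ℝ) T,
      HasDerivAt g
        ((1 / (1 - γ)) • (D * g t) + (1 / (1 - γ)) • (g t * D)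
          - (2 : ℝ) • (g t * (σ * σᵀ) * g t)
          - (γ / (2 * (1 - γ) ^ 2)) • (D * (σ * σᵀ)⁻¹ * D)
          + (1 / (1 - γ)) • ϱ) t)
    (hfode : ∀ t ∈ Set.Ioo (0 : ℝ) T,
      HasDerivAt f
        ((1 / (1 - γ)) • D.mulVec (f t)
          - (2 : ℝ) • (g t).mulVec ((σ * σᵀ).mulVec (f t))
          - (2 : ℝ) • (g t).mulVec (D.mulVec w)
          - (2 * γ / (1 - γ)) • (g t).mulVec (D.mulVec μ - r • e)
          + (γ / (1 - γ) ^ 2) • D.mulVec ((σ * σᵀ)⁻¹.mulVec (D.mulVec μ - r • e))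
          + (1 / (1 - γ)) • ρ) t)
    (hf0ode : ∀ t ∈ Set.Ioo (0 : ℝ) T,
      HasDerivAt f₀
        (-((w ᵥ* D) ⬝ᵥ f t)
          - (γ / (1 - γ)) * ((μ ᵥ* D - r • e) ⬝ᵥ f t)
          - (1 / 2) * (f t ⬝ᵥ (σ * σᵀ).mulVec (f t))
          - (g t * (σ * σᵀ)).trace
          - γ * ((μ ᵥ* D - r • e) ⬝ᵥ (σ * σᵀ)⁻¹.mulVec (D.mulVec μ - r • e))
              / (2 * (1 - γ) ^ 2)
          - (r * γ - ρ₀) / (1 - γ)) t)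
    (hgT : g T = 0) (hfT : f T = 0) (hf0T : f₀ T = 0)
    (φ₁ : ℝ → (Fin n → ℝ) → ℝ)
    (hφ₁ : ∀ t S, φ₁ t S = Real.exp (S ⬝ᵥ (g t).mulVec S + f t ⬝ᵥ S + f₀ t)) :
    (∀ S : Fin n → ℝ, φ₁ T S = 1) ∧
    ∀ t ∈ Set.Ioo (0 : ℝ) T, ∀ S : Fin n → ℝ,
      deriv (fun t' => φ₁ t' S) t
        + ((w - S) ᵥ* D) ⬝ᵥ gradient' (φ₁ t) S
        + (γ / (1 - γ)) * (((μ - S) ᵥ* D - r • e) ⬝ᵥ gradient' (φ₁ t) S)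
        + (γ * (((μ - S) ᵥ* D - r • e) ⬝ᵥ (σ * σᵀ)⁻¹.mulVec (D.mulVec (μ - S) - r • e))
              / (2 * (1 - γ) ^ 2)
            + (r * γ - ρ₀ - S ⬝ᵥ ρ - S ⬝ᵥ ϱ.mulVec S) / (1 - γ)) * φ₁ t S
        + (1 / 2) * ((hessian' (φ₁ t) S) * (σ * σᵀ)).trace = 0 := by
  constructor
  · intro S
    rw [hφ₁, hgT, hfT, hf0T]
    simp
  · intro t ht S
    have hγ1 : (1:ℝ) - γ ≠ 0 := by have := hγ.2; nlinarith [hγ.1]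
    have hA : (g t).IsSymm := hgsymm t
    have hDs : D.IsSymm := by rw [hD]; exact (Matrix.isSymm_diagonal α)
    have hSs : (σ * σᵀ).IsSymm := by
      unfold Matrix.IsSymm; rw [Matrix.transpose_mul, Matrix.transpose_transpose]
    have hPs : ((σ * σᵀ)⁻¹).IsSymm := by
      unfold Matrix.IsSymm; rw [Matrix.transpose_nonsing_inv, hSs.eq]
    -- time derivative
    have hQ := hasDerivAt_Q g f f₀ _ _ _ t S (hgode t ht) (hfode t ht) (hf0ode t ht)
    have hderiv : deriv (fun t' => φ₁ t' S) t
        = Real.exp (S ⬝ᵥ (g t) *ᵥ S + f t ⬝ᵥ S + f₀ t) *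
          (S ⬝ᵥ ((1 / (1 - γ)) • (D * g t) + (1 / (1 - γ)) • (g t * D)
          - (2 : ℝ) • (g t * (σ * σᵀ) * g t)
          - (γ / (2 * (1 - γ) ^ 2)) • (D * (σ * σᵀ)⁻¹ * D)
          + (1 / (1 - γ)) • ϱ) *ᵥ S
          + ((1 / (1 - γ)) • D.mulVec (f t)
          - (2 : ℝ) • (g t).mulVec ((σ * σᵀ).mulVec (f t))
          - (2 : ℝ) • (g t).mulVec (D.mulVec w)
          - (2 * γ / (1 - γ)) • (g t).mulVec (D.mulVec μ - r • e)
          + (γ / (1 - γ) ^ 2) • D.mulVec ((σ * σᵀ)⁻¹.mulVec (D.mulVec μ - r • e))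
          + (1 / (1 - γ)) • ρ) ⬝ᵥ S
          + (-((w ᵥ* D) ⬝ᵥ f t)
          - (γ / (1 - γ)) * ((μ ᵥ* D - r • e) ⬝ᵥ f t)
          - (1 / 2) * (f t ⬝ᵥ (σ * σᵀ).mulVec (f t))
          - (g t * (σ * σᵀ)).trace
          - γ * ((μ ᵥ* D - r • e) ⬝ᵥ (σ * σᵀ)⁻¹.mulVec (D.mulVec μ - r • e))
              / (2 * (1 - γ) ^ 2)
          - (r * γ - ρ₀) / (1 - γ))) := by
      have hfeq : (fun t' => φ₁ t' S)
          = fun t' => Real.exp (S ⬝ᵥ (g t') *ᵥ S + f t' ⬝ᵥ S + f₀ t') := by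
        funext t'; rw [hφ₁]
      rw [hfeq]
      exact hQ.exp.deriv
    have hfun : φ₁ t = fun S' : Fin n → ℝ =>
        Real.exp (S' ⬝ᵥ (g t) *ᵥ S' + f t ⬝ᵥ S' + f₀ t) := by
      funext S'; rw [hφ₁]
    have hgrad : gradient' (φ₁ t) S
        = Real.exp (S ⬝ᵥ (g t) *ᵥ S + f t ⬝ᵥ S + f₀ t) • ((2:ℝ) • ((g t) *ᵥ S) + f t) := by
      rw [hfun]; exact gradient_ansatz (g t) hA (f t) (f₀ t) S
    have hhess : hessian' (φ₁ t) S
        = Real.exp (S ⬝ᵥ (g t) *ᵥ S + f t ⬝ᵥ S + f₀ t) •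
          (Matrix.vecMulVec ((2:ℝ) • ((g t) *ᵥ S) + f t) ((2:ℝ) • ((g t) *ᵥ S) + f t)
            + (2:ℝ) • (g t)) := by
      rw [hfun]; exact hessian_ansatz (g t) hA (f t) (f₀ t) S
    set φv := Real.exp (S ⬝ᵥ (g t) *ᵥ S + f t ⬝ᵥ S + f₀ t) with hφv
    set v := (2:ℝ) • ((g t) *ᵥ S) + f t with hv
    have htr : ((φv • (Matrix.vecMulVec v v + (2:ℝ) • (g t))) * (σ * σᵀ)).trace
        = φv * (v ⬝ᵥ (σ * σᵀ) *ᵥ v + 2 * ((g t) * (σ * σᵀ)).trace) := by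
      rw [Matrix.smul_mul, Matrix.trace_smul]
      simp only [Matrix.add_mul, Matrix.trace_add, trace_vecMulVec_mul, Matrix.smul_mul,
        Matrix.trace_smul, smul_eq_mul]
    rw [hderiv, hgrad, hhess, htr, hφ₁]
    rw [show Real.exp (S ⬝ᵥ (g t) *ᵥ S + f t ⬝ᵥ S + f₀ t) = φv from rfl]
    simp only [dotProduct_smul, smul_eq_mul]
    have dv : ∀ (M : Matrix (Fin n) (Fin n) ℝ) (x y : Fin n → ℝ),
        x ⬝ᵥ M *ᵥ y = y ⬝ᵥ Mᵀ *ᵥ x := fun M x y => by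
      rw [dotProduct_comm, mv_dot]
    have hvm : ∀ x : Fin n → ℝ, x ᵥ* D = D *ᵥ x := fun x => by
      rw [← Matrix.mulVec_transpose, hDs.eq]
    have key : (S ⬝ᵥ ((1 / (1 - γ)) • (D * g t) + (1 / (1 - γ)) • (g t * D)
          - (2 : ℝ) • (g t * (σ * σᵀ) * g t)
          - (γ / (2 * (1 - γ) ^ 2)) • (D * (σ * σᵀ)⁻¹ * D)
          + (1 / (1 - γ)) • ϱ) *ᵥ S
          + ((1 / (1 - γ)) • D.mulVec (f t)
          - (2 : ℝ) • (g t).mulVec ((σ * σᵀ).mulVec (f t))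
          - (2 : ℝ) • (g t).mulVec (D.mulVec w)
          - (2 * γ / (1 - γ)) • (g t).mulVec (D.mulVec μ - r • e)
          + (γ / (1 - γ) ^ 2) • D.mulVec ((σ * σᵀ)⁻¹.mulVec (D.mulVec μ - r • e))
          + (1 / (1 - γ)) • ρ) ⬝ᵥ S
          + (-((w ᵥ* D) ⬝ᵥ f t)
          - (γ / (1 - γ)) * ((μ ᵥ* D - r • e) ⬝ᵥ f t)
          - (1 / 2) * (f t ⬝ᵥ (σ * σᵀ).mulVec (f t))
          - (g t * (σ * σᵀ)).trace
          - γ * ((μ ᵥ* D - r • e) ⬝ᵥ (σ * σᵀ)⁻¹.mulVec (D.mulVec μ - r • e))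
              / (2 * (1 - γ) ^ 2)
          - (r * γ - ρ₀) / (1 - γ)))
          + ((w - S) ᵥ* D) ⬝ᵥ v
          + γ / (1 - γ) * (((μ - S) ᵥ* D - r • e) ⬝ᵥ v)
          + (γ * (((μ - S) ᵥ* D - r • e) ⬝ᵥ (σ * σᵀ)⁻¹ *ᵥ (D *ᵥ (μ - S) - r • e))
              / (2 * (1 - γ) ^ 2)
            + (r * γ - ρ₀ - S ⬝ᵥ ρ - S ⬝ᵥ ϱ *ᵥ S) / (1 - γ))
          + 1 / 2 * (v ⬝ᵥ (σ * σᵀ) *ᵥ v + 2 * (g t * (σ * σᵀ)).trace) = 0 := by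
      rw [hv]
      simp only [hvm, Matrix.mulVec_add, Matrix.mulVec_sub, Matrix.mulVec_smul,
        Matrix.add_mulVec, Matrix.sub_mulVec, Matrix.smul_mulVec,
        Matrix.mulVec_mulVec, dotProduct_add, add_dotProduct, dotProduct_sub,
        sub_dotProduct, dotProduct_smul, smul_dotProduct, smul_eq_mul,
        Matrix.neg_mulVec, dotProduct_neg, neg_dotProduct, mul_assoc]
      simp only [mv_dot, Matrix.transpose_mul, Matrix.transpose_transpose,
        Matrix.transpose_nonsing_inv, hA.eq, hDs.eq, hϱ.eq, Matrix.mulVec_mulVec,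
        Matrix.mul_assoc]
      have tdefs : ∀ M : Matrix (Fin n) (Fin n) ℝ, True := fun _ => trivial
      have E1 : S ⬝ᵥ (g t * D) *ᵥ S = S ⬝ᵥ (D * g t) *ᵥ S := by
        rw [dv, Matrix.transpose_mul, hA.eq, hDs.eq]
      have E2 : f t ⬝ᵥ D *ᵥ S = S ⬝ᵥ D *ᵥ f t := by
        rw [dv, hDs.eq]
      have E3 : f t ⬝ᵥ (σ * (σᵀ * g t)) *ᵥ S = S ⬝ᵥ (g t * (σ * σᵀ)) *ᵥ f t := by
        rw [dv]
        simp [Matrix.transpose_mul, Matrix.transpose_transpose, hA.eq, Matrix.mul_assoc]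
      have E4 : S ⬝ᵥ (D * ((σ * σᵀ)⁻¹ * D)) *ᵥ μ = μ ⬝ᵥ (D * ((σ * σᵀ)⁻¹ * D)) *ᵥ S := by
        rw [dv]
        simp [Matrix.transpose_mul, Matrix.transpose_transpose,
          Matrix.transpose_nonsing_inv, hDs.eq, Matrix.mul_assoc]
      have E5 : S ⬝ᵥ (D * (σ * σᵀ)⁻¹) *ᵥ e = e ⬝ᵥ ((σ * σᵀ)⁻¹ * D) *ᵥ S := by
        rw [dv]
        simp [Matrix.transpose_mul, Matrix.transpose_transpose,
          Matrix.transpose_nonsing_inv, hDs.eq, Matrix.mul_assoc]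
      have E6 : μ ⬝ᵥ (D * (σ * σᵀ)⁻¹) *ᵥ e = e ⬝ᵥ ((σ * σᵀ)⁻¹ * D) *ᵥ μ := by
        rw [dv]
        simp [Matrix.transpose_mul, Matrix.transpose_transpose,
          Matrix.transpose_nonsing_inv, hDs.eq, Matrix.mul_assoc]
      have E7 : ρ ⬝ᵥ S = S ⬝ᵥ ρ := dotProduct_comm _ _
      rw [E1, E2, E3, E4, E5, E6, E7]
      field_simp
      ring
    linear_combination φv * key
end
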